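/- Let d ≥ 1, λ > 0, and let f : ℝ^d → ℝ be continuous, coercive, and λ-concave. Define f*(x) = sup_{y ∈ ℝ^d} (⟨x,y⟩ − f(y)) and f**(y) = sup_{x ∈ ℝ^d} (⟨x,y⟩ − f*(x)). If f**(y) = f(y) at some point y ∈ ℝ^d, then f is differentiable at y, f** is differentiable at y, and ∇f(y) = ∇f**(y). -/

import Mathlib

/-!
Put `g = f - (λ/2)‖·‖²`. A supergradient of the concave `g` at `y` gives a quadratic upper
bound `f z ≤ f y + ψ (z - y) + (λ/2)‖z - y‖²`, and a subgradient of the convex `f**` at `y`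
gives, since `f** ≤ f` with equality at `y`, an affine lower bound
`f y + φ (z - y) ≤ f** z ≤ f z`. The two bounds touch at `y`, so their derivatives `φ` and `ψ`
agree; both `f` and `f**` are squeezed between two functions touching them at `y` with the same
derivative there, hence are differentiable with it.
-/

open scoped RealInnerProductSpace
noncomputable section

/-- Legendre transform: `f*(x) = sup_y (⟨x,y⟩ − f(y))`. -/
def conj {d : ℕ} (f : EuclideanSpace ℝ (Fin d) → ℝ)
    (x : EuclideanSpace ℝ (Fin d)) : ℝ :=
  ⨆ y : EuclideanSpace ℝ (Fin d), (⟪x, y⟫ - f y)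

open Set Filter Topology Asymptotics ContinuousLinearMap

section NormedSpace

variable {E : Type*} [NormedAddCommGroup E] [NormedSpace ℝ E]

theorem ConcaveOn.exists_le_add_apply_sub {g : E → ℝ} (hg : ConcaveOn ℝ univ g)
    (hc : Continuous g) (y : E) :
    ∃ φ : StrongDual ℝ E, ∀ z, g z ≤ g y + φ (z - y) := by
  set S : Set (E × ℝ) := {q | q.1 ∈ univ ∧ q.2 < g q.1}
  have hS : IsOpen S := by
    simpa [S] using isOpen_lt continuous_snd (hc.comp continuous_fst)
  obtain ⟨L, hL⟩ := geometric_hahn_banach_open_point hg.convex_strict_hypograph hS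
    (by simp [S] : (y, g y) ∉ S)
  set c := L (0, 1)
  have hL_apply : ∀ z t, L (z, t) = L (z, 0) + t * c := fun z t => by
    rw [← smul_eq_mul, ← map_smul, ← map_add]; simp
  -- the separating functional is not vertical
  have hc_pos : 0 < c := by
    have := hL (y, g y - 1) (by simp)
    rw [hL_apply y (g y - 1), hL_apply y (g y)] at this
    linarith
  have hsep : ∀ z, L (z, 0) + g z * c ≤ L (y, 0) + g y * c := fun z => by
    refine le_of_forall_pos_lt_add fun ε hε => ?_
    have := hL (z, g z - ε / c) (by simp [hε, hc_pos])
    rw [hL_apply z, hL_apply y, sub_mul, div_mul_cancel₀ _ hc_pos.ne'] at this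
    linarith
  refine ⟨-c⁻¹ • L.comp (.inl ℝ E ℝ), fun z => ?_⟩
  have hz := hsep z
  simp only [smul_apply, comp_apply, inl_apply, smul_eq_mul]
  rw [show ((z - y, 0) : E × ℝ) = (z, 0) - (y, 0) by simp, map_sub]
  field_simp
  nlinarith

theorem ConvexOn.exists_add_apply_sub_le {g : E → ℝ} (hg : ConvexOn ℝ univ g)
    (hc : Continuous g) (y : E) :
    ∃ φ : StrongDual ℝ E, ∀ z, g y + φ (z - y) ≤ g z := by
  obtain ⟨φ, hφ⟩ := hg.neg.exists_le_add_apply_sub hc.neg y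
  refine ⟨-φ, fun z => ?_⟩
  have hz := hφ z
  simp only [Pi.neg_apply, neg_apply] at hz ⊢
  linarith

theorem hasFDerivAt_const_add_apply_sub (c : ℝ) (φ : StrongDual ℝ E) (y : E) :
    HasFDerivAt (fun z => c + φ (z - y)) φ y := by
  simpa using (φ.hasFDerivAt.comp y ((hasFDerivAt_id y).sub_const y)).const_add c

variable {a h b : E → ℝ} {y : E}

theorem HasFDerivAt.eq_of_eventuallyLE_of_eq {La Lb : StrongDual ℝ E}
    (ha : HasFDerivAt a La y) (hb : HasFDerivAt b Lb y) (hab : a ≤ᶠ[𝓝 y] b) (hy : a y = b y) :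
    La = Lb := by
  have hmin : IsLocalMin (b - a) y := by
    filter_upwards [hab] with z hz
    simp only [Pi.sub_apply, hy, sub_self, sub_nonneg, hz]
  exact (sub_eq_zero.mp (hmin.hasFDerivAt_eq_zero (hb.sub ha))).symm

theorem HasFDerivAt.of_eventuallyLE_of_eventuallyLE {L : StrongDual ℝ E}
    (ha : HasFDerivAt a L y) (hb : HasFDerivAt b L y) (hah : a ≤ᶠ[𝓝 y] h) (hhb : h ≤ᶠ[𝓝 y] b)
    (hay : a y = h y) (hby : b y = h y) : HasFDerivAt h L y := by
  have hba : HasFDerivAt (b - a) (0 : StrongDual ℝ E) y := by simpa using hb.sub ha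
  -- `0 ≤ h - a ≤ b - a` near `y`, and `b - a` is `o(z - y)`
  have hha : HasFDerivAt (h - a) (0 : StrongDual ℝ E) y := by
    rw [hasFDerivAt_iff_isLittleO] at hba ⊢
    refine IsBigO.trans_isLittleO (IsBigO.of_bound' ?_) hba
    filter_upwards [hah, hhb] with z hza hzb
    simp only [Pi.sub_apply, hay, hby, sub_self, sub_zero, zero_apply, Real.norm_eq_abs]
    rw [abs_of_nonneg (sub_nonneg.mpr hza), abs_of_nonneg (by linarith)]
    linarith
  simpa using hha.add ha

end NormedSpace

section InnerProductSpace

variable {F : Type*} [NormedAddCommGroup F] [InnerProductSpace ℝ F]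

theorem ConcaveOn.exists_le_add_apply_sub_add_sq_norm_sub {f : F → ℝ} {lam : ℝ}
    (hf : ConcaveOn ℝ univ fun z => f z - lam / 2 * ‖z‖ ^ 2) (hc : Continuous f) (y : F) :
    ∃ ψ : StrongDual ℝ F, ∀ z, f z ≤ f y + ψ (z - y) + lam / 2 * ‖z - y‖ ^ 2 := by
  obtain ⟨φ, hφ⟩ := hf.exists_le_add_apply_sub (by fun_prop) y
  refine ⟨φ + lam • innerSL ℝ y, fun z => ?_⟩
  have hz := hφ z
  have hsq : ‖z‖ ^ 2 = ‖y‖ ^ 2 + 2 * ⟪y, z - y⟫ + ‖z - y‖ ^ 2 := by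
    rw [← norm_add_sq_real, add_sub_cancel]
  simp only [add_apply, smul_apply, innerSL_apply_apply, smul_eq_mul]
  rw [hsq] at hz
  linarith

theorem hasFDerivAt_add_apply_sub_add_sq_norm_sub (c lam : ℝ) (ψ : StrongDual ℝ F) (y : F) :
    HasFDerivAt (fun z => c + ψ (z - y) + lam / 2 * ‖z - y‖ ^ 2) ψ y := by
  have hsq : HasFDerivAt (fun z => lam / 2 * ‖z - y‖ ^ 2) (0 : StrongDual ℝ F) y := by
    simpa using (((hasFDerivAt_id y).sub_const y).norm_sq).const_mul (lam / 2)
  exact ((hasFDerivAt_const_add_apply_sub c ψ y).add hsq).congr_fderiv (add_zero ψ)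

end InnerProductSpace

section Conjugate

variable {d : ℕ} {f : EuclideanSpace ℝ (Fin d) → ℝ}

theorem inner_sub_le_conj {x : EuclideanSpace ℝ (Fin d)}
    (hf : BddAbove (range fun u => ⟪x, u⟫ - f u)) (u : EuclideanSpace ℝ (Fin d)) :
    ⟪x, u⟫ - f u ≤ conj f x :=
  le_ciSup hf u

theorem convexOn_conj (hf : ∀ x, BddAbove (range fun u => ⟪x, u⟫ - f u)) :
    ConvexOn ℝ univ (conj f) := by
  refine ⟨convex_univ, fun u _ v _ a b ha hb hab => ciSup_le fun x => ?_⟩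
  have hu := mul_le_mul_of_nonneg_left (inner_sub_le_conj (hf u) x) ha
  have hv := mul_le_mul_of_nonneg_left (inner_sub_le_conj (hf v) x) hb
  simp only [inner_add_left, real_inner_smul_left, smul_eq_mul]
  linear_combination hu + hv + f x * hab

theorem tendsto_sub_inner_cocompact (hcoer : ∀ M : ℝ, ∃ R : ℝ, ∀ z, R ≤ ‖z‖ → M ≤ f z / ‖z‖)
    (x : EuclideanSpace ℝ (Fin d)) : Tendsto (fun u => f u - ⟪x, u⟫) (cocompact _) atTop := by
  obtain ⟨R, hR⟩ := hcoer (‖x‖ + 1)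
  refine tendsto_atTop_mono' _ ?_ tendsto_norm_cocompact_atTop
  filter_upwards [tendsto_norm_cocompact_atTop.eventually_ge_atTop (max R 1)] with u hu
  have hu_pos : 0 < ‖u‖ := by linarith [le_max_right R 1]
  have hfu : (‖x‖ + 1) * ‖u‖ ≤ f u := (le_div_iff₀ hu_pos).mp (hR u (le_of_max_le_left hu))
  nlinarith [real_inner_le_norm x u]

variable (hcont : Continuous f) (hcoer : ∀ M : ℝ, ∃ R : ℝ, ∀ z, R ≤ ‖z‖ → M ≤ f z / ‖z‖)
include hcont hcoer

theorem bddAbove_range_inner_sub (x : EuclideanSpace ℝ (Fin d)) :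
    BddAbove (range fun u => ⟪x, u⟫ - f u) := by
  obtain ⟨u₀, hu₀⟩ := Continuous.exists_forall_le (f := fun u => f u - ⟪x, u⟫) (by fun_prop)
    (tendsto_sub_inner_cocompact hcoer x)
  refine ⟨⟪x, u₀⟫ - f u₀, ?_⟩
  rintro _ ⟨u, rfl⟩
  linarith [hu₀ u]

theorem inner_sub_conj_le (x z : EuclideanSpace ℝ (Fin d)) :
    ⟪z, x⟫ - conj f x ≤ f z := by
  linarith [real_inner_comm x z ▸ inner_sub_le_conj (bddAbove_range_inner_sub hcont hcoer x) z]

theorem conj_conj_le (z : EuclideanSpace ℝ (Fin d)) : conj (conj f) z ≤ f z :=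
  ciSup_le fun x => inner_sub_conj_le hcont hcoer x z

theorem convexOn_conj_conj : ConvexOn ℝ univ (conj (conj f)) := by
  refine convexOn_conj fun z => ⟨f z, ?_⟩
  rintro _ ⟨x, rfl⟩
  exact inner_sub_conj_le hcont hcoer x z

end Conjugate

theorem stmt10_general (d : ℕ) (lam : ℝ)
    (f : EuclideanSpace ℝ (Fin d) → ℝ)
    (hcont : Continuous f)
    (hcoer : ∀ M : ℝ, ∃ R : ℝ, ∀ z, R ≤ ‖z‖ → M ≤ f z / ‖z‖)
    (hConc : ConcaveOn ℝ Set.univ (fun y => f y - lam / 2 * ‖y‖ ^ 2))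
    (y : EuclideanSpace ℝ (Fin d))
    (htouch : conj (conj f) y = f y) :
    DifferentiableAt ℝ f y ∧ DifferentiableAt ℝ (conj (conj f)) y ∧
    gradient f y = gradient (conj (conj f)) y := by
  set F := conj (conj f)
  have hFf : ∀ z, F z ≤ f z := conj_conj_le hcont hcoer
  have hFconv : ConvexOn ℝ univ F := convexOn_conj_conj hcont hcoer
  obtain ⟨φ, hFφ⟩ := hFconv.exists_add_apply_sub_le
    (continuousOn_univ.mp (hFconv.continuousOn isOpen_univ)) y
  obtain ⟨ψ, hfψ⟩ := hConc.exists_le_add_apply_sub_add_sq_norm_sub hcont y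
  have hA := hasFDerivAt_const_add_apply_sub (f y) φ y
  have hB := hasFDerivAt_add_apply_sub_add_sq_norm_sub (f y) lam ψ y
  have hAF : ∀ z, f y + φ (z - y) ≤ F z := by rw [← htouch]; exact hFφ
  obtain rfl : φ = ψ := hA.eq_of_eventuallyLE_of_eq hB
    (.of_forall fun z => (hAF z).trans ((hFf z).trans (hfψ z))) (by simp)
  have hf : HasFDerivAt f φ y := hA.of_eventuallyLE_of_eventuallyLE hB
    (.of_forall fun z => (hAF z).trans (hFf z)) (.of_forall hfψ) (by simp) (by simp)
  have hF : HasFDerivAt F φ y := hA.of_eventuallyLE_of_eventuallyLE hB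
    (.of_forall hAF) (.of_forall fun z => (hFf z).trans (hfψ z)) (by simp [htouch])
    (by simp [htouch])
  exact ⟨hf.differentiableAt, hF.differentiableAt, by simp only [gradient, hf.fderiv, hF.fderiv]⟩

theorem stmt10 (d : ℕ) (hd : 1 ≤ d) (lam : ℝ) (hlam : 0 < lam)
    (f : EuclideanSpace ℝ (Fin d) → ℝ)
    (hcont : Continuous f)
    (hcoer : ∀ M : ℝ, ∃ R : ℝ, ∀ z, R ≤ ‖z‖ → M ≤ f z / ‖z‖)
    (hConc : ConcaveOn ℝ Set.univ (fun y => f y - lam / 2 * ‖y‖ ^ 2))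
    (y : EuclideanSpace ℝ (Fin d))
    (htouch : conj (conj f) y = f y) :
    DifferentiableAt ℝ f y ∧ DifferentiableAt ℝ (conj (conj f)) y ∧
    gradient f y = gradient (conj (conj f)) y :=
  stmt10_general d lam f hcont hcoer hConc y htouch
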